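/- For every m ≥ 1 the derivative of the monic generalized Hermite polynomial of even degree satisfies the polynomial identity (K_{2m}^{(γ)})'(x) = 2m·K_{2m−1}^{(γ)}(x). Consequently, at every real root z₀ of K_{2m}^{(γ)} one has K_{2m−1}^{(γ)}(z₀) = (1/(2m))·(K_{2m}^{(γ)})'(z₀), i.e. the reversed measure ξ_{γ,2m−1}^R, whose Stieltjes transform is K_{2m−1}^{(γ)}/K_{2m}^{(γ)}, has equal masses 1/(2m) at all 2m support points. -/
import Mathlib


open Polynomial

/-- The monic generalized Hermite polynomials `K_n^{(γ)}`, defined by `K 0 = 1`, `K 1 = X`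
and `K_{n+1}(x) = x · K_n(x) - â_n · K_{n-1}(x)` where `â_n = n/2` for even `n` and
`â_n = (n+γ)/2` for odd `n`; they are orthogonal with respect to `|x|^γ exp(-x²)` on `ℝ`. -/
noncomputable def genHermite (γ : ℝ) : ℕ → Polynomial ℝ
  | 0 => 1
  | 1 => Polynomial.X
  | n + 2 =>
      Polynomial.X * genHermite γ (n + 1) -
        Polynomial.C (if Even (n + 1) then ((n : ℝ) + 1) / 2 else ((n : ℝ) + 1 + γ) / 2) *
          genHermite γ n

lemma gh_rec_odd (γ : ℝ) (m : ℕ) :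
    genHermite γ (2*m+2) = X * genHermite γ (2*m+1)
      - C ((2*(m:ℝ)+1+γ)/2) * genHermite γ (2*m) := by
  rw [show 2*m+2 = (2*m)+2 from rfl, genHermite]
  norm_num [Nat.even_add_one, parity_simps]

lemma gh_rec_even (γ : ℝ) (m : ℕ) :
    genHermite γ (2*m+3) = X * genHermite γ (2*m+2)
      - C ((m:ℝ)+1) * genHermite γ (2*m+1) := by
  rw [show 2*m+3 = (2*m+1)+2 from rfl, genHermite]
  have h : Even (2*m+1+1) := ⟨m+1, by ring⟩
  rw [if_pos h, show 2*m+1+1 = 2*m+2 from rfl]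
  push_cast
  ring_nf

lemma gh_key (γ : ℝ) (m : ℕ) :
    derivative (genHermite γ (2*m+2)) = C (2*(m:ℝ)+2) * genHermite γ (2*m+1) ∧
    X * derivative (genHermite γ (2*m+3)) =
      C (2*(m:ℝ)+3) * X * genHermite γ (2*m+2)
        + C (((m:ℝ)+1) * γ) * genHermite γ (2*m+1) := by
  induction m with
  | zero =>
    have h1 : genHermite γ 1 = X := rfl
    have h0 : genHermite γ 0 = 1 := rfl
    have h2 := gh_rec_odd γ 0
    have h3 := gh_rec_even γ 0
    norm_num [h0, h1] at h2 h3
    constructor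
    · refine Polynomial.funext fun x => ?_
      have e2 := congrArg (eval x) (congrArg derivative h2)
      simp only [derivative_sub, derivative_mul, derivative_X, derivative_C, derivative_one,
        eval_mul, eval_add, eval_sub, eval_C, eval_X, eval_one, eval_zero, mul_zero, zero_mul,
        mul_one, one_mul, sub_zero] at e2 ⊢
      have e2' := congrArg (eval x) h2
      simp only [eval_mul, eval_sub, eval_C, eval_X] at e2'
      norm_num [h1]
      linear_combination e2
    · refine Polynomial.funext fun x => ?_
      have e3 := congrArg (eval x) (congrArg derivative h3)
      have e2 := congrArg (eval x) (congrArg derivative h2)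
      have e2' := congrArg (eval x) h2
      simp only [derivative_sub, derivative_mul, derivative_X, derivative_C, derivative_one,
        eval_mul, eval_add, eval_sub, eval_C, eval_X, eval_one, eval_zero, mul_zero, zero_mul,
        mul_one, one_mul, sub_zero] at e3 e2 e2' ⊢
      norm_num [h1] at e3 e2 e2' ⊢
      linear_combination x * e3 + x^2 * e2 - 2*x*e2'
  | succ k ih =>
    obtain ⟨ih1, ih2⟩ := ih
    have ro1 := gh_rec_odd γ (k+1)
    have re0 := gh_rec_even γ k
    have re1 := gh_rec_even γ (k+1)
    simp only [show 2*(k+1) = 2*k+2 from by ring, show 2*k+2+2 = 2*k+4 from by omega,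
      show 2*k+2+1 = 2*k+3 from by omega, show 2*k+2+3 = 2*k+5 from by omega] at ro1 re1
    push_cast at ro1 re1
    have hA : derivative (genHermite γ (2*k+4)) = C (2*(k:ℝ)+4) * genHermite γ (2*k+3) := by
      refine Polynomial.funext fun x => ?_
      have edro1 := congrArg (eval x) (congrArg derivative ro1)
      have eih1 := congrArg (eval x) ih1
      have eih2 := congrArg (eval x) ih2
      have ere0 := congrArg (eval x) re0
      simp only [derivative_sub, derivative_mul, derivative_X, derivative_C,
        eval_mul, eval_add, eval_sub, eval_C, eval_X, eval_one, eval_zero, mul_zero, zero_mul,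
        mul_one, one_mul, sub_zero] at edro1 eih1 eih2 ere0 ⊢
      linear_combination edro1 + eih2 - ((2*(k:ℝ)+3+γ)/2) * eih1 - (2*(k:ℝ)+3) * ere0
    have hB : X * derivative (genHermite γ (2*k+5)) =
        C (2*(k:ℝ)+5) * X * genHermite γ (2*k+4)
          + C (((k:ℝ)+2) * γ) * genHermite γ (2*k+3) := by
      refine Polynomial.funext fun x => ?_
      have edre1 := congrArg (eval x) (congrArg derivative re1)
      have ehA := congrArg (eval x) hA
      have ero1 := congrArg (eval x) ro1
      have eih2 := congrArg (eval x) ih2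
      have ere0 := congrArg (eval x) re0
      simp only [derivative_sub, derivative_mul, derivative_X, derivative_C,
        eval_mul, eval_add, eval_sub, eval_C, eval_X, eval_one, eval_zero, mul_zero, zero_mul,
        mul_one, one_mul, sub_zero] at edre1 ehA ero1 eih2 ere0 ⊢
      linear_combination x * edre1 + x^2 * ehA - (2*(k:ℝ)+4)*x*ero1
        - ((k:ℝ)+2)*eih2 - ((k:ℝ)+2)*γ*ere0
    refine ⟨?_, ?_⟩
    · simp only [show 2*(k+1) = 2*k+2 from by ring, show 2*k+2+2 = 2*k+4 from by omega,
        show 2*k+2+1 = 2*k+3 from by omega]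
      push_cast
      convert hA using 2
      ring
    · simp only [show 2*(k+1) = 2*k+2 from by ring, show 2*k+2+2 = 2*k+4 from by omega,
        show 2*k+2+1 = 2*k+3 from by omega, show 2*k+2+3 = 2*k+5 from by omega]
      push_cast
      convert hB using 3 <;> ring

/-- **Derivative identity for even-degree generalized Hermite polynomials.**
`(K_{2m}^{(γ)})' = 2m · K_{2m-1}^{(γ)}`; consequently at every real root `z₀` of
`K_{2m}^{(γ)}` one has `K_{2m-1}^{(γ)}(z₀) = (1/(2m)) · (K_{2m}^{(γ)})'(z₀)`, i.e. the
reversed measure `ξ_{γ,2m-1}^R` with Stieltjes transform `K_{2m-1}^{(γ)}/K_{2m}^{(γ)}` has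
equal masses `1/(2m)` at all `2m` support points. -/
theorem genHermite_even_derivative (γ : ℝ) (hγ : -1 < γ) (m : ℕ) (hm : 1 ≤ m) :
    Polynomial.derivative (genHermite γ (2 * m)) =
      Polynomial.C ((2 * m : ℕ) : ℝ) * genHermite γ (2 * m - 1) ∧
    ∀ z₀ : ℝ, (genHermite γ (2 * m)).eval z₀ = 0 →
      (genHermite γ (2 * m - 1)).eval z₀ =
        (1 / (2 * (m : ℝ))) * (Polynomial.derivative (genHermite γ (2 * m))).eval z₀ := by
  obtain ⟨k, rfl⟩ : ∃ k, m = k + 1 := ⟨m - 1, by omega⟩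
  have h1 : Polynomial.derivative (genHermite γ (2 * (k+1))) =
      Polynomial.C ((2 * (k+1) : ℕ) : ℝ) * genHermite γ (2 * (k+1) - 1) := by
    simp only [show 2*(k+1) = 2*k+2 from by ring, show 2*k+2-1 = 2*k+1 from by omega]
    push_cast
    convert (gh_key γ k).1 using 2
  refine ⟨h1, fun z₀ _ => ?_⟩
  rw [h1]
  simp only [eval_mul, eval_C]
  have hk : (2 * ((k:ℝ)+1)) ≠ 0 := by positivity
  push_cast
  field_simp
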